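/- arXiv:1302.7119 — 2 statements merged into one kernel-verified Lean document; each statement's English description precedes it below -/
import Mathlib

section
/- For all integers r ≥ 0, i with 1 ≤ i ≤ r+1 and j ≥ 1, the identity g_{i,j} − (x/i)·g_{i,j}^{(1)} + j·g_{i−1,j+1} = 0 holds at every point (x, z_0, …, z_{r+1}) ∈ ℝ^{r+3}, where g_{i,j}^{(1)} = ∂g_{i,j}/∂x. -/
open scoped BigOperators

/-- Partial derivative of a function on `ℝⁿ = (Fin n → ℝ)` with respect to the `m`-th
coordinate (and `0` if `m` is out of range). -/
noncomputable def pderiv' (n m : ℕ) (f : (Fin n → ℝ) → ℝ) : (Fin n → ℝ) → ℝ :=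
  fun p => if h : m < n then fderiv ℝ f p (Pi.single (⟨m, h⟩ : Fin n) 1) else 0

/-- The total derivative operator `D f = ∂f/∂x + ∑_{m=0}^{r} z_{m+1} ∂f/∂z_m` on functions of
the variables `(x, z_0, …, z_{r+1})`, where `x` is coordinate `0` and `z_m` is coordinate
`m+1`. -/
noncomputable def Dop (r : ℕ) (f : (Fin (r+3) → ℝ) → ℝ) : (Fin (r+3) → ℝ) → ℝ :=
  fun p => pderiv' (r+3) 0 f p +
    ∑ m : Fin (r+1), p ⟨m.val + 2, by have := m.isLt; omega⟩ * pderiv' (r+3) (m.val + 1) f p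

/-- The polynomial function
`g_{i,j}(x,z) = ∑_{m=0}^{i} (−1)^{i−m} C(i,m) ((i+j−m−1)!/((j−1)!(i+j)!)) x^m z_m`. -/
noncomputable def gfun (r i j : ℕ) : (Fin (r+3) → ℝ) → ℝ :=
  fun p => ∑ m : Fin (i+1),
    (-1 : ℝ) ^ (i - m.val) * (i.choose m.val : ℝ) *
      ((Nat.factorial (i + j - m.val - 1) : ℝ) /
        ((Nat.factorial (j - 1) : ℝ) * (Nat.factorial (i + j) : ℝ))) *
      (p 0) ^ (m.val) * (if h : m.val + 1 < r + 3 then p ⟨m.val + 1, h⟩ else 0)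

/-- `g_{i,j}^{(s)} = ∂^s g_{i,j} / ∂x^s`. -/
noncomputable def gs (r i j s : ℕ) : (Fin (r+3) → ℝ) → ℝ :=
  (pderiv' (r+3) 0)^[s] (gfun r i j)

/-!
Since `g_{i,j} = ∑ₘ c_{i,j,m} xᵐ zₘ`, the operator `x ∂/∂x` multiplies the `m`-th term by `m`, so
the identity splits into the coefficient identities `(i - m) c_{i,j,m} + i j c_{i-1,j+1,m} = 0`.
These follow from `(i - m) C(i,m) = i C(i-1,m)` and `j! = j (j-1)!`; at `m = i` both terms vanish.
-/

open Finset Function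

theorem fderiv_apply_single_eq_deriv_update {𝕜 ι F : Type*} [NontriviallyNormedField 𝕜]
    [Fintype ι] [DecidableEq ι] [NormedAddCommGroup F] [NormedSpace 𝕜 F]
    {f : (ι → 𝕜) → F} {p : ι → 𝕜} (hf : DifferentiableAt 𝕜 f p) (k : ι) :
    fderiv 𝕜 f p (Pi.single k 1) = deriv (fun t => f (update p k t)) (p k) := by
  rw [← update_eq_self k p] at hf
  exact ((hf.hasFDerivAt.comp_hasDerivAt (p k) (hasDerivAt_update p k (p k))).deriv.trans
    (by rw [update_eq_self])).symm

def zCoord {r : ℕ} (p : Fin (r+3) → ℝ) (m : ℕ) : ℝ :=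
  if h : m + 1 < r + 3 then p ⟨m + 1, h⟩ else 0

@[fun_prop]
theorem differentiable_zCoord (r m : ℕ) :
    Differentiable ℝ fun p : Fin (r+3) → ℝ => zCoord p m := by
  by_cases h : m + 1 < r + 3 <;> simp only [zCoord, h, dite_true, dite_false] <;> fun_prop

theorem zCoord_update_zero {r : ℕ} (p : Fin (r+3) → ℝ) (t : ℝ) (m : ℕ) :
    zCoord (update p 0 t) m = zCoord p m := by
  unfold zCoord
  split_ifs
  · exact update_of_ne (by simp [Fin.ext_iff]) _ _
  · rfl

noncomputable def gfunCoeff (i j m : ℕ) : ℝ :=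
  (-1 : ℝ) ^ (i - m) * (i.choose m : ℝ) *
    ((Nat.factorial (i + j - m - 1) : ℝ) /
      ((Nat.factorial (j - 1) : ℝ) * (Nat.factorial (i + j) : ℝ)))

theorem gfunCoeff_of_lt {i j m : ℕ} (h : i < m) : gfunCoeff i j m = 0 := by
  simp [gfunCoeff, Nat.choose_eq_zero_of_lt h]

theorem gfun_eq_sum_range (r i j : ℕ) {N : ℕ} (hN : i < N) (p : Fin (r+3) → ℝ) :
    gfun r i j p = ∑ m ∈ range N, gfunCoeff i j m * p 0 ^ m * zCoord p m := by
  rw [← sum_subset (range_subset_range.2 (by omega : i + 1 ≤ N)) fun m _ hm => by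
    rw [gfunCoeff_of_lt (by simpa using hm), zero_mul, zero_mul]]
  rw [← Fin.sum_univ_eq_sum_range (fun m => gfunCoeff i j m * p 0 ^ m * zCoord p m)]
  rfl

theorem coord_zero_mul_gs_one (r i j : ℕ) (p : Fin (r+3) → ℝ) :
    p 0 * gs r i j 1 p = ∑ m ∈ range (i+1), m * gfunCoeff i j m * p 0 ^ m * zCoord p m := by
  have hgfun : gfun r i j = fun q => ∑ m ∈ range (i+1), gfunCoeff i j m * q 0 ^ m * zCoord q m :=
    funext (gfun_eq_sum_range r i j i.lt_succ_self)
  have hdiff : DifferentiableAt ℝ (gfun r i j) p := by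
    rw [hgfun]
    fun_prop
  have hline : HasDerivAt (fun t => gfun r i j (update p 0 t))
      (∑ m ∈ range (i+1), gfunCoeff i j m * (m * p 0 ^ (m - 1)) * zCoord p m) (p 0) := by
    simp only [hgfun, zCoord_update_zero, update_self]
    exact HasDerivAt.fun_sum fun m _ => ((hasDerivAt_pow m (p 0)).const_mul _).mul_const _
  rw [gs, iterate_one, pderiv', dif_pos (by omega), show (⟨0, _⟩ : Fin (r+3)) = 0 from rfl,
    fderiv_apply_single_eq_deriv_update hdiff, hline.deriv, mul_sum]
  refine sum_congr rfl fun m _ => ?_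
  rcases m with _ | m
  · simp
  · simp only [Nat.add_sub_cancel, pow_succ]
    push_cast
    ring

theorem gfunCoeff_recurrence (k m : ℕ) {j : ℕ} (hj : 1 ≤ j) :
    ((k + 1 : ℝ) - m) * gfunCoeff (k+1) j m + (k + 1) * j * gfunCoeff k (j+1) m = 0 := by
  obtain ⟨t, rfl⟩ : ∃ t, j = t + 1 := ⟨j - 1, by omega⟩
  rcases lt_trichotomy m (k + 1) with hm | rfl | hm
  · obtain ⟨a, rfl⟩ : ∃ a, k = m + a := ⟨k - m, by omega⟩
    have hchoose : ((m + a).choose m : ℝ) * (m + a + 1) = (m + a + 1).choose m * (a + 1) := by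
      have := Nat.choose_mul_succ_eq (m + a) m
      rw [show m + a + 1 - m = a + 1 by omega] at this
      exact_mod_cast this
    have e1 : m + a + 1 - m = a + 1 := by omega
    have e2 : m + a - m = a := by omega
    have e3 : m + a + 1 + (t + 1) - m - 1 = a + t + 1 := by omega
    have e4 : m + a + (t + 1 + 1) = m + a + 1 + (t + 1) := by omega
    simp only [gfunCoeff, e1, e2, e3, e4, Nat.add_sub_cancel, Nat.factorial_succ t]
    push_cast
    field_simp
    linear_combination ((a + t + 1).factorial * (-1) ^ a : ℝ) * hchoose
  · simp [gfunCoeff_of_lt (Nat.lt_succ_self k)]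
  · simp [gfunCoeff_of_lt hm, gfunCoeff_of_lt (by omega : k < m)]

theorem stmt_1_general (r i j : ℕ) (hi : 1 ≤ i) (hj : 1 ≤ j)
    (p : Fin (r+3) → ℝ) :
    gfun r i j p - (p 0 / (i : ℝ)) * gs r i j 1 p + (j : ℝ) * gfun r (i-1) (j+1) p = 0 := by
  obtain ⟨k, rfl⟩ : ∃ k, i = k + 1 := ⟨i - 1, by omega⟩
  rw [div_mul_eq_mul_div, coord_zero_mul_gs_one, gfun_eq_sum_range r (k+1) j k.succ.lt_succ_self,
    Nat.add_sub_cancel, gfun_eq_sum_range r k (j+1) (by omega : k < k + 2), sum_div, mul_sum,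
    ← sum_sub_distrib, ← sum_add_distrib]
  refine sum_eq_zero fun m _ => ?_
  have hk : (k + 1 : ℝ) ≠ 0 := by positivity
  push_cast
  field_simp
  linear_combination p 0 ^ m * zCoord p m * gfunCoeff_recurrence k m hj

/-- the identity `g_{i,j} − (x/i)·g_{i,j}^{(1)} + j·g_{i−1,j+1} = 0` holds at every
point of `ℝ^{r+3}`. -/
theorem stmt_1 (r i j : ℕ) (hi : 1 ≤ i) (hir : i ≤ r + 1) (hj : 1 ≤ j)
    (p : Fin (r+3) → ℝ) :
    gfun r i j p - (p 0 / (i : ℝ)) * gs r i j 1 p + (j : ℝ) * gfun r (i-1) (j+1) p = 0 :=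
  stmt_1_general r i j hi hj p
end

section
/- Fix integers 2 ≤ k ≤ l. Consider on ℝ³ (coordinates x, y, z) the family of vector fields: ∂x, x∂x, x²∂x + (k−1)xy∂y + (l−1)xz∂z, y∂y, z∂z; x^i∂y for i = 0, …, k−1; and x^j∂z for j = 0, …, l−1. These 5 + k + l vector fields are linearly independent over ℝ, and their span is closed under the Lie bracket of vector fields. -/
open scoped BigOperators

/-- The family of `5 + k + l` vector fields of Statement 18 on `ℝ³` (coordinates `x, y, z`):
`∂x, x∂x, x²∂x + (k−1)xy∂y + (l−1)xz∂z, y∂y, z∂z`; `xⁱ∂y` for `i = 0, …, k−1`; and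
`xʲ∂z` for `j = 0, …, l−1`. -/
noncomputable def famShift (k l : ℕ) :
    (Fin 5 ⊕ Fin k ⊕ Fin l) → ((Fin 3 → ℝ) → (Fin 3 → ℝ)) :=
  Sum.elim
    ![fun _ => ![1, 0, 0],
      fun p => ![p 0, 0, 0],
      fun p => ![(p 0)^2, ((k : ℝ) - 1) * (p 0 * p 1), ((l : ℝ) - 1) * (p 0 * p 2)],
      fun p => ![0, p 1, 0],
      fun p => ![0, 0, p 2]]
    (Sum.elim
      (fun i => fun p => ![0, (p 0) ^ (i : ℕ), 0])
      (fun j => fun p => ![0, 0, (p 0) ^ (j : ℕ)]))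

open Polynomial

/-!
Every field of the family has the shape `f(x)∂x + (g(x)y + u(x))∂y + (h(x)z + v(x))∂z` with
polynomial coefficients (`polyField f g h u v`), and so does the bracket of two such fields, with
coefficients given by an explicit polynomial formula. The span of the family consists exactly of
the fields of this shape with `f = a + bx + cx²`, `g = d + (k - 1)cx`, `h = e + (l - 1)cx`,
`deg u < k` and `deg v < l` (`IsShiftSymmetry k l`). The bracket preserves these constraints: in
`f`, `g`, `h` the terms of degree above the allowed one cancel, and the new `u` is
`f₁u₂' - g₁u₂ - (f₂u₁' - g₂u₁)`, whose coefficient of `xᵏ` cancels thanks to the weight `k - 1`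
in `g` (likewise for `v`). Linear independence is read off from the coefficients of the five
polynomials.
-/

namespace Polynomial

variable {R : Type*} {n : ℕ}

theorem mem_degreeLT_iff_exists_sum_monomial [Semiring R] {p : R[X]} :
    p ∈ degreeLT R n ↔ ∃ c : Fin n → R, ∑ i : Fin n, monomial (i : ℕ) (c i) = p :=
  ⟨fun hp => ⟨degreeLTEquiv R n ⟨p, hp⟩,
      congrArg Subtype.val ((degreeLTEquiv R n).symm_apply_apply ⟨p, hp⟩)⟩,
    fun ⟨c, hc⟩ => hc ▸ ((degreeLTEquiv R n).symm c).2⟩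

theorem coeff_sum_fin_monomial [Semiring R] (c : Fin n → R) (i : Fin n) :
    (∑ j : Fin n, monomial (j : ℕ) (c j)).coeff i = c i :=
  congrFun ((degreeLTEquiv R n).apply_symm_apply c) i

/-- The coefficient of `X ^ n` is `c * (n - 1 - (n - 1)) * u.coeff (n - 1) = 0`; the higher ones
only involve coefficients of `u` that vanish. -/
theorem mul_derivative_sub_mul_mem_degreeLT [CommRing R] {u : R[X]} (hu : u ∈ degreeLT R n)
    (a b c d : R) :
    (C a + C b * X + C c * X ^ 2) * derivative u - (C d + C (((n : R) - 1) * c) * X) * u ∈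
      degreeLT R n := by
  rw [mem_degreeLT, degree_lt_iff_coeff_zero] at hu ⊢
  intro m hm
  simp only [pow_two, add_mul, mul_assoc, coeff_sub, coeff_add, coeff_C_mul]
  rcases m with _ | _ | m
  · simp [coeff_derivative, hu 1 (by omega), hu 0 hm]
  all_goals
    simp only [coeff_derivative, coeff_X_mul, hu _ (hm.trans (Nat.le_succ _)), hu _ hm,
      mul_coeff_zero, coeff_X_zero, Nat.cast_add, Nat.cast_one, zero_mul, mul_zero, add_zero,
      zero_add, zero_sub, neg_eq_zero]
    rcases hm.eq_or_lt with rfl | hlt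
    · push_cast; ring
    · simp [hu _ (Nat.le_of_lt_succ hlt)]

end Polynomial

noncomputable def polyField (f g h u v : ℝ[X]) : (Fin 3 → ℝ) → Fin 3 → ℝ := fun p =>
  ![f.eval (p 0), g.eval (p 0) * p 1 + u.eval (p 0), h.eval (p 0) * p 2 + v.eval (p 0)]

theorem hasFDerivAt_eval_apply {ι : Type*} [Fintype ι] (r : ℝ[X]) (i : ι) (p : ι → ℝ) :
    HasFDerivAt (fun q : ι → ℝ => r.eval (q i))
      (r.derivative.eval (p i) • ContinuousLinearMap.proj (R := ℝ) i) p :=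
  (r.hasDerivAt (p i)).comp_hasFDerivAt (f := fun q : ι → ℝ => q i) p (hasFDerivAt_apply i p)

theorem fderiv_eval_mul_apply_add_eval {ι : Type*} [Fintype ι] (g u : ℝ[X]) (i j : ι)
    (p w : ι → ℝ) :
    fderiv ℝ (fun q : ι → ℝ => g.eval (q i) * q j + u.eval (q i)) p w =
      g.derivative.eval (p i) * w i * p j + g.eval (p i) * w j + u.derivative.eval (p i) * w i := by
  rw [(((hasFDerivAt_eval_apply g i p).fun_mul (hasFDerivAt_apply j p)).fun_add
    (hasFDerivAt_eval_apply u i p)).fderiv]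
  simp only [add_apply, smul_apply, ContinuousLinearMap.proj_apply, smul_eq_mul]
  ring

theorem differentiable_polyField (f g h u v : ℝ[X]) : Differentiable ℝ (polyField f g h u v) :=
  differentiable_pi.2 fun j => by
    fin_cases j <;>
      simp only [polyField, Fin.isValue, Fin.zero_eta, Fin.mk_one, Fin.reduceFinMk,
        Matrix.cons_val_zero, Matrix.cons_val_one, Matrix.cons_val] <;> fun_prop

theorem fderiv_polyField_apply (f g h u v : ℝ[X]) (p w : Fin 3 → ℝ) :
    fderiv ℝ (polyField f g h u v) p w =
      ![f.derivative.eval (p 0) * w 0,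
        g.derivative.eval (p 0) * w 0 * p 1 + g.eval (p 0) * w 1 + u.derivative.eval (p 0) * w 0,
        h.derivative.eval (p 0) * w 0 * p 2 + h.eval (p 0) * w 2 +
          v.derivative.eval (p 0) * w 0] := by
  ext j
  have hj := congrArg (· w) (fderiv_apply (differentiable_polyField f g h u v p) j)
  simp only [ContinuousLinearMap.coe_comp, Function.comp_apply,
    ContinuousLinearMap.proj_apply] at hj
  rw [← hj]
  fin_cases j
  · simpa [polyField] using congrArg (· w) (hasFDerivAt_eval_apply f 0 p).fderiv
  · simpa [polyField] using fderiv_eval_mul_apply_add_eval g u 0 1 p w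
  · simpa [polyField] using fderiv_eval_mul_apply_add_eval h v 0 2 p w

theorem lieBracket_polyField (f₁ g₁ h₁ u₁ v₁ f₂ g₂ h₂ u₂ v₂ : ℝ[X]) :
    VectorField.lieBracket ℝ (polyField f₁ g₁ h₁ u₁ v₁) (polyField f₂ g₂ h₂ u₂ v₂) =
      polyField (f₁ * derivative f₂ - f₂ * derivative f₁)
        (f₁ * derivative g₂ - f₂ * derivative g₁) (f₁ * derivative h₂ - f₂ * derivative h₁)
        (f₁ * derivative u₂ - g₁ * u₂ - (f₂ * derivative u₁ - g₂ * u₁))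
        (f₁ * derivative v₂ - h₁ * v₂ - (f₂ * derivative v₁ - h₂ * v₁)) := by
  ext p j
  rw [VectorField.lieBracket, fderiv_polyField_apply, fderiv_polyField_apply]
  fin_cases j <;>
    simp only [polyField, Fin.isValue, Fin.zero_eta, Fin.mk_one, Fin.reduceFinMk,
      Matrix.cons_val_zero, Matrix.cons_val_one, Matrix.cons_val, Pi.sub_apply, eval_sub,
      eval_mul] <;> ring

theorem polyField_eq_zero_iff {f g h u v : ℝ[X]} :
    polyField f g h u v = 0 ↔ f = 0 ∧ g = 0 ∧ h = 0 ∧ u = 0 ∧ v = 0 := by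
  refine ⟨fun H => ?_, ?_⟩
  · have hev : ∀ x y z : ℝ, f.eval x = 0 ∧ g.eval x * y + u.eval x = 0 ∧
        h.eval x * z + v.eval x = 0 := fun x y z => by
      simpa [polyField, funext_iff, Fin.forall_fin_succ] using congrFun H ![x, y, z]
    have hu : u = 0 := funext fun x => by simpa using (hev x 0 0).2.1
    have hv : v = 0 := funext fun x => by simpa using (hev x 0 0).2.2
    refine ⟨funext fun x => by simpa using (hev x 0 0).1, funext fun x => ?_,
      funext fun x => ?_, hu, hv⟩
    · simpa [hu] using (hev x 1 0).2.1
    · simpa [hv] using (hev x 0 1).2.2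
  · rintro ⟨rfl, rfl, rfl, rfl, rfl⟩
    ext p j
    fin_cases j <;> simp [polyField]

def IsShiftSymmetry (k l : ℕ) (V : (Fin 3 → ℝ) → Fin 3 → ℝ) : Prop :=
  ∃ (a b c d e : ℝ) (u v : ℝ[X]), u ∈ degreeLT ℝ k ∧ v ∈ degreeLT ℝ l ∧
    V = polyField (C a + C b * X + C c * X ^ 2) (C d + C (((k : ℝ) - 1) * c) * X)
      (C e + C (((l : ℝ) - 1) * c) * X) u v

theorem sum_smul_famShift (k l : ℕ) (c : Fin 5 ⊕ Fin k ⊕ Fin l → ℝ) :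
    ∑ a, c a • famShift k l a =
      polyField (C (c (.inl 0)) + C (c (.inl 1)) * X + C (c (.inl 2)) * X ^ 2)
        (C (c (.inl 3)) + C (((k : ℝ) - 1) * c (.inl 2)) * X)
        (C (c (.inl 4)) + C (((l : ℝ) - 1) * c (.inl 2)) * X)
        (∑ i : Fin k, monomial (i : ℕ) (c (.inr (.inl i))))
        (∑ j : Fin l, monomial (j : ℕ) (c (.inr (.inr j)))) := by
  ext p j
  fin_cases j <;>
    simp only [famShift, polyField, Fin.isValue, Fin.zero_eta, Fin.mk_one, Fin.reduceFinMk,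
      Finset.sum_apply, Pi.smul_apply, smul_eq_mul, Fintype.sum_sum_type, Fin.sum_univ_five,
      Sum.elim_inl, Sum.elim_inr, Matrix.cons_val', Matrix.cons_val_fin_one, Matrix.cons_val_zero,
      Matrix.cons_val_one, Matrix.cons_val, mul_one, mul_zero, add_zero, zero_add,
      Finset.sum_const_zero, eval_add, eval_sub, eval_mul, eval_pow, eval_C, eval_X, eval_natCast,
      eval_one, eval_finsetSum, eval_monomial, map_mul, map_sub, map_natCast, map_one] <;> ring

theorem mem_span_famShift_iff {k l : ℕ} {V : (Fin 3 → ℝ) → Fin 3 → ℝ} :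
    V ∈ Submodule.span ℝ (Set.range (famShift k l)) ↔ IsShiftSymmetry k l V := by
  rw [Submodule.mem_span_range_iff_exists_fun]
  constructor
  · rintro ⟨c, rfl⟩
    exact ⟨_, _, _, _, _, _, _, mem_degreeLT_iff_exists_sum_monomial.2 ⟨_, rfl⟩,
      mem_degreeLT_iff_exists_sum_monomial.2 ⟨_, rfl⟩, sum_smul_famShift k l c⟩
  · rintro ⟨a, b, c, d, e, u, v, hu, hv, rfl⟩
    obtain ⟨cu, rfl⟩ := mem_degreeLT_iff_exists_sum_monomial.1 hu
    obtain ⟨cv, rfl⟩ := mem_degreeLT_iff_exists_sum_monomial.1 hv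
    exact ⟨Sum.elim ![a, b, c, d, e] (Sum.elim cu cv), sum_smul_famShift k l _⟩

theorem linearIndependent_famShift (k l : ℕ) : LinearIndependent ℝ (famShift k l) := by
  rw [Fintype.linearIndependent_iff]
  intro c hc
  rw [sum_smul_famShift, polyField_eq_zero_iff] at hc
  obtain ⟨hf, hg, hh, hu, hv⟩ := hc
  rintro (a | i | j)
  · fin_cases a
    · simpa using congrArg (coeff · 0) hf
    · simpa using congrArg (coeff · 1) hf
    · simpa using congrArg (coeff · 2) hf
    · simpa using congrArg (coeff · 0) hg
    · simpa using congrArg (coeff · 0) hh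
  · simpa only [coeff_sum_fin_monomial, coeff_zero] using congrArg (coeff · i) hu
  · simpa only [coeff_sum_fin_monomial, coeff_zero] using congrArg (coeff · j) hv

theorem IsShiftSymmetry.lieBracket {k l : ℕ} {V W : (Fin 3 → ℝ) → Fin 3 → ℝ}
    (hV : IsShiftSymmetry k l V) (hW : IsShiftSymmetry k l W) :
    IsShiftSymmetry k l (VectorField.lieBracket ℝ V W) := by
  obtain ⟨a₁, b₁, c₁, d₁, e₁, u₁, v₁, hu₁, hv₁, rfl⟩ := hV
  obtain ⟨a₂, b₂, c₂, d₂, e₂, u₂, v₂, hu₂, hv₂, rfl⟩ := hW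
  refine ⟨a₁ * b₂ - a₂ * b₁, 2 * (a₁ * c₂ - a₂ * c₁), b₁ * c₂ - b₂ * c₁,
    ((k : ℝ) - 1) * (a₁ * c₂ - a₂ * c₁), ((l : ℝ) - 1) * (a₁ * c₂ - a₂ * c₁), _, _,
    sub_mem (mul_derivative_sub_mul_mem_degreeLT hu₂ a₁ b₁ c₁ d₁)
      (mul_derivative_sub_mul_mem_degreeLT hu₁ a₂ b₂ c₂ d₂),
    sub_mem (mul_derivative_sub_mul_mem_degreeLT hv₂ a₁ b₁ c₁ e₁)
      (mul_derivative_sub_mul_mem_degreeLT hv₁ a₂ b₂ c₂ e₂), ?_⟩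
  rw [lieBracket_polyField]
  congr 1 <;>
    simp only [derivative_add, derivative_C, derivative_C_mul_X, derivative_C_mul_X_pow] <;>
    simp only [map_sub, map_mul, map_natCast, map_one, Nat.cast_ofNat, map_ofNat] <;> ring

theorem stmt_18_general (k l : ℕ) :
    LinearIndependent ℝ (famShift k l) ∧
    (∀ V ∈ Submodule.span ℝ (Set.range (famShift k l)),
     ∀ W ∈ Submodule.span ℝ (Set.range (famShift k l)),
      VectorField.lieBracket ℝ V W ∈ Submodule.span ℝ (Set.range (famShift k l))) := by
  refine ⟨linearIndependent_famShift k l, fun V hV W hW => ?_⟩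
  rw [mem_span_famShift_iff] at hV hW ⊢
  exact hV.lieBracket hW

/-- for `2 ≤ k ≤ l` these `5 + k + l` vector fields are linearly independent
over `ℝ` and their span is closed under the Lie bracket of vector fields. -/
theorem stmt_18 (k l : ℕ) (hk : 2 ≤ k) (hkl : k ≤ l) :
    LinearIndependent ℝ (famShift k l) ∧
    (∀ V ∈ Submodule.span ℝ (Set.range (famShift k l)),
     ∀ W ∈ Submodule.span ℝ (Set.range (famShift k l)),
      VectorField.lieBracket ℝ V W ∈ Submodule.span ℝ (Set.range (famShift k l))) :=
  stmt_18_general k l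
end
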